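/- Under the hypotheses of the previous setup (finite sets $A_k$ with $\max A_{k+1} \le \frac14 d(A_k)$), if $x_i, y_i \in A_i$ with $x_i = y_i$ for $i < k$ and $x_k \ne y_k$, then for every $i$ with $k+1 \le i \le n$ one has $|x_i|, |y_i| \le \frac{|x_k - y_k|}{2^{i-k+1}}$. -/

import Mathlib

/-!
Any two points of `A k` are at least `d(A k)` apart, so `d(A k) ≤ |x k - y k|`; hence all of
`A (k + 1)` lies within `|x k - y k| / 4` of the origin. A set contained in `[-M, M]` has gap at
most `2M`, so each further step `max A (j + 1) ≤ d(A j) / 4 ≤ max A j / 2` halves the bound.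
-/

/-- Minimal gap of a finite set: min distance between distinct points if `2 ≤ card`,
and `|x|` for a singleton `{x}`. -/
noncomputable def dGap (A : Finset ℝ) : ℝ :=
  if 2 ≤ A.card then sInf {r : ℝ | ∃ x ∈ A, ∃ y ∈ A, x ≠ y ∧ r = |x - y|}
  else sInf {r : ℝ | ∃ x ∈ A, r = |x|}

/-- `max A = max_{a ∈ A} |a|`. -/
noncomputable def maxAbs (A : Finset ℝ) : ℝ := sSup {r : ℝ | ∃ x ∈ A, r = |x|}

lemma setOf_exists_eq_abs (A : Finset ℝ) :
    {r : ℝ | ∃ x ∈ A, r = |x|} = ↑(A.image (fun x => |x|)) := by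
  ext r; simp [eq_comm]

lemma maxAbs_nonneg (A : Finset ℝ) : 0 ≤ maxAbs A :=
  Real.sSup_nonneg fun _ ⟨_, _, hr⟩ => hr ▸ abs_nonneg _

lemma abs_le_maxAbs {A : Finset ℝ} {a : ℝ} (ha : a ∈ A) : |a| ≤ maxAbs A := by
  rw [maxAbs, setOf_exists_eq_abs]
  exact le_csSup (A.image _).finite_toSet.bddAbove (Finset.mem_image_of_mem _ ha)

lemma dGap_le_abs_sub {A : Finset ℝ} {a b : ℝ} (ha : a ∈ A) (hb : b ∈ A) (hab : a ≠ b) :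
    dGap A ≤ |a - b| := by
  rw [dGap, if_pos (show 2 ≤ A.card from Finset.one_lt_card.mpr ⟨a, ha, b, hb, hab⟩)]
  exact csInf_le ⟨0, fun _ ⟨_, _, _, _, _, hr⟩ => hr ▸ abs_nonneg _⟩ ⟨a, ha, b, hb, hab, rfl⟩

lemma dGap_le_two_mul_maxAbs (A : Finset ℝ) : dGap A ≤ 2 * maxAbs A := by
  by_cases hcard : 2 ≤ A.card
  · obtain ⟨a, ha, b, hb, hab⟩ := Finset.one_lt_card.mp hcard
    calc dGap A ≤ |a - b| := dGap_le_abs_sub ha hb hab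
      _ ≤ |a| + |b| := abs_sub _ _
      _ ≤ 2 * maxAbs A := by linarith [abs_le_maxAbs ha, abs_le_maxAbs hb]
  rw [dGap, if_neg hcard]
  have hM := maxAbs_nonneg A
  obtain rfl | ⟨a, ha⟩ := A.eq_empty_or_nonempty
  · simp only [Finset.notMem_empty, false_and, exists_false, Set.ofPred_false, Real.sInf_empty]
    linarith
  calc sInf {r : ℝ | ∃ x ∈ A, r = |x|} ≤ |a| :=
        csInf_le ⟨0, fun _ ⟨_, _, hr⟩ => hr ▸ abs_nonneg _⟩ ⟨a, ha, rfl⟩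
    _ ≤ 2 * maxAbs A := by linarith [abs_le_maxAbs ha]

lemma maxAbs_add_one_add_le {A : ℕ → Finset ℝ}
    (hmax : ∀ k, maxAbs (A (k + 1)) ≤ dGap (A k) / 4) (k m : ℕ) :
    maxAbs (A (k + 1 + m)) ≤ dGap (A k) / 2 ^ (m + 2) := by
  induction m with
  | zero => norm_num; exact hmax k
  | succ m ih =>
    calc maxAbs (A (k + 1 + (m + 1))) ≤ dGap (A (k + 1 + m)) / 4 := hmax _
      _ ≤ 2 * maxAbs (A (k + 1 + m)) / 4 := by gcongr; exact dGap_le_two_mul_maxAbs _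
      _ ≤ 2 * (dGap (A k) / 2 ^ (m + 2)) / 4 := by gcongr
      _ = dGap (A k) / 2 ^ (m + 1 + 2) := by ring

theorem stmt1_general (A : ℕ → Finset ℝ)
    (hmax : ∀ k, maxAbs (A (k + 1)) ≤ dGap (A k) / 4)
    (n : ℕ) (x y : ℕ → ℝ)
    (hx : ∀ i < n, x i ∈ A i) (hy : ∀ i < n, y i ∈ A i)
    (k : ℕ) (hk : k < n)
    (hneq : x k ≠ y k) :
    ∀ i, k < i → i < n → |x i| ≤ |x k - y k| / 2 ^ (i - k + 1) ∧
      |y i| ≤ |x k - y k| / 2 ^ (i - k + 1) := by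
  intro i hki hin
  obtain ⟨m, rfl⟩ : ∃ m, i = k + 1 + m := ⟨i - k - 1, by omega⟩
  have hbound : maxAbs (A (k + 1 + m)) ≤ |x k - y k| / 2 ^ (k + 1 + m - k + 1) := by
    rw [show k + 1 + m - k + 1 = m + 2 by omega]
    exact (maxAbs_add_one_add_le hmax k m).trans
      (by gcongr; exact dGap_le_abs_sub (hx k hk) (hy k hk) hneq)
  exact ⟨(abs_le_maxAbs (hx _ hin)).trans hbound, (abs_le_maxAbs (hy _ hin)).trans hbound⟩

theorem stmt1 (A : ℕ → Finset ℝ)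
    (hne : ∀ k, (A k).Nonempty)
    (h0 : ∀ k, ∀ a ∈ A k, a ≠ 0)
    (hmax : ∀ k, maxAbs (A (k + 1)) ≤ dGap (A k) / 4)
    (n : ℕ) (x y : ℕ → ℝ)
    (hx : ∀ i < n, x i ∈ A i) (hy : ∀ i < n, y i ∈ A i)
    (k : ℕ) (hk : k < n)
    (heq : ∀ i < k, x i = y i) (hneq : x k ≠ y k) :
    ∀ i, k < i → i < n → |x i| ≤ |x k - y k| / 2 ^ (i - k + 1) ∧
      |y i| ≤ |x k - y k| / 2 ^ (i - k + 1) :=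
  stmt1_general A hmax n x y hx hy k hk hneq
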